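/- A finitely generated residually finite group that is not virtually abelian admits a strictly descending chain G = K₀ ⊵ K₁ ⊵ K₂ ⊵ ⋯ of finite-index normal subgroups of G such that each quotient K_{i-1}/K_i is nonabelian, hence dc(K_{i-1}/K_i) ≤ 5/8. -/
import Mathlib


/-- Degree of commutativity of a group (meaningful for finite groups). -/
noncomputable def dc (G : Type*) [Group G] : ℚ :=
  (Nat.card {p : G × G // p.1 * p.2 = p.2 * p.1} : ℚ) / (Nat.card G : ℚ) ^ 2


open ConjClasses



/-- Key counting lemma: a finite nonabelian group has at most `5/8 |H|` conjugacy classes. -/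
lemma eight_mul_card_conjClasses_le (H : Type*) [Group H] [Finite H]
    (h : ¬ ∀ a b : H, a * b = b * a) :
    8 * Nat.card (ConjClasses H) ≤ 5 * Nat.card H := by
  classical
  cases nonempty_fintype H
  -- the center has index at least 4
  have hidx : 4 ≤ (Subgroup.center H).index := by
    by_contra hlt
    push_neg at hlt
    have hpos : 0 < (Subgroup.center H).index := Nat.pos_of_ne_zero (Subgroup.center H).finiteIndex_of_finite.index_ne_zero
    have hcard : Nat.card (H ⧸ Subgroup.center H) = (Subgroup.center H).index := rfl
    have hcyc : IsCyclic (H ⧸ Subgroup.center H) := by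
      interval_cases hi : (Subgroup.center H).index
      · have : Nat.card (H ⧸ Subgroup.center H) = 1 := by omega
        have : Subsingleton (H ⧸ Subgroup.center H) := Nat.card_eq_one_iff_unique.mp (by omega) |>.1
        infer_instance
      · exact isCyclic_of_prime_card (p := 2) (by omega)
      · exact isCyclic_of_prime_card (p := 3) (by omega)
    exact h (fun a b => commutative_of_cyclic_center_quotient (QuotientGroup.mk' (Subgroup.center H))
      (le_of_eq (QuotientGroup.ker_mk' (Subgroup.center H))) a b)
  have hZn : Nat.card (Subgroup.center H) * (Subgroup.center H).index = Nat.card H := Subgroup.card_mul_index (Subgroup.center H)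
  have h4z : 4 * Nat.card (Subgroup.center H) ≤ Nat.card H := by
    calc 4 * Nat.card (Subgroup.center H) ≤ (Subgroup.center H).index * Nat.card (Subgroup.center H) := Nat.mul_le_mul_right _ hidx
    _ = Nat.card H := by rw [mul_comm]; exact hZn
  -- class equation
  have eqn := Group.card_center_add_sum_card_noncenter_eq_card H
  set S := (noncenter H).toFinset with hS
  have h2 : ∀ x ∈ S, 2 ≤ x.carrier.toFinset.card := by
    intro x hx
    rw [hS, Set.mem_toFinset] at hx
    obtain ⟨a, ha, b, hb, hab⟩ := hx
    exact Finset.one_lt_card.mpr ⟨a, Set.mem_toFinset.mpr ha, b, Set.mem_toFinset.mpr hb, hab⟩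
  have hsum : 2 * S.card ≤ ∑ x ∈ S, x.carrier.toFinset.card := by
    calc 2 * S.card = ∑ _x ∈ S, 2 := by rw [Finset.sum_const, smul_eq_mul, mul_comm]
    _ ≤ _ := Finset.sum_le_sum h2
  have hk : Fintype.card (ConjClasses H) = S.card + Fintype.card (Subgroup.center H) := by
    have hbij : Fintype.card (Subgroup.center H) = Fintype.card ((noncenter H)ᶜ : Set _) :=
      Fintype.card_congr ((ConjClasses.mk_bijOn H).equiv _)
    have hcompl : Sᶜ = ((noncenter H)ᶜ).toFinset := by rw [hS, Set.toFinset_compl]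
    rw [hbij, ← Set.toFinset_card, ← hcompl, ← Finset.card_add_card_compl S]
  rw [Nat.card_eq_fintype_card, Nat.card_eq_fintype_card] at *
  omega

lemma dc_le_five_eighths (H : Type*) [Group H] [Finite H]
    (h : ¬ ∀ a b : H, a * b = b * a) : dc H ≤ 5 / 8 := by
  have hk := eight_mul_card_conjClasses_le H h
  have hcomm : Nat.card {p : H × H // p.1 * p.2 = p.2 * p.1}
      = Nat.card (ConjClasses H) * Nat.card H := card_comm_eq_card_conjClasses_mul_card H
  have hn : 0 < Nat.card H := Nat.card_pos
  have hnQ : (0:ℚ) < (Nat.card H : ℚ) := by exact_mod_cast hn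
  rw [dc, hcomm, div_le_div_iff₀ (by positivity) (by norm_num)]
  have h8 : (8 * (Nat.card (ConjClasses H) : ℚ)) ≤ 5 * (Nat.card H : ℚ) := by
    exact_mod_cast hk
  calc ((Nat.card (ConjClasses H) * Nat.card H : ℕ) : ℚ) * 8
      = (8 * (Nat.card (ConjClasses H):ℚ)) * (Nat.card H : ℚ) := by push_cast; ring
    _ ≤ (5 * (Nat.card H : ℚ)) * (Nat.card H : ℚ) :=
        mul_le_mul_of_nonneg_right h8 (le_of_lt hnQ)
    _ = 5 * ((Nat.card H:ℚ)^2) := by ring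


section Chain
variable {G : Type*} [Group G]

lemma chain_step
    (hres : ∀ g : G, g ≠ 1 → ∃ N : Subgroup G, N.Normal ∧ N.FiniteIndex ∧ g ∉ N)
    (hnva : ¬ ∃ H : Subgroup G, H.FiniteIndex ∧ ∀ a b : H, a * b = b * a)
    (K : Subgroup G) (hKn : K.Normal) (hKf : K.FiniteIndex) :
    ∃ K' : Subgroup G, K'.Normal ∧ K'.FiniteIndex ∧ K' < K ∧
      ¬ ∀ a b : K, (a * b)⁻¹ * (b * a) ∈ K'.subgroupOf K := by
  push_neg at hnva
  obtain ⟨a, b, hab⟩ := hnva K hKf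
  set c : G := ((a : G) * b)⁻¹ * ((b : G) * a) with hc
  have hcne : c ≠ 1 := by
    intro h1
    rw [hc] at h1
    apply hab
    apply Subtype.ext
    have h2 : ((a : G) * b) = (b : G) * a := inv_mul_eq_one.mp h1
    push_cast
    exact h2
  obtain ⟨N, hNn, hNf, hcN⟩ := hres c hcne
  refine ⟨K ⊓ N, ?_, ?_, ?_, ?_⟩
  · haveI := hKn; haveI := hNn; infer_instance
  · haveI := hKf; haveI := hNf; infer_instance
  · refine lt_of_le_of_ne inf_le_left (fun he => hcN ?_)
    have hcK : c ∈ K := by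
      rw [hc]
      exact K.mul_mem (K.inv_mem (K.mul_mem a.2 b.2)) (K.mul_mem b.2 a.2)
    rw [← he] at hcK
    exact hcK.2
  · intro hall
    have := hall a b
    rw [Subgroup.mem_subgroupOf] at this
    have hc' : ((((a * b)⁻¹ * (b * a) : K)) : G) = c := by push_cast; rw [hc]
    rw [hc'] at this
    exact hcN this.2

end Chain


/-- A finitely generated residually finite group which is not virtually abelian admits
a strictly descending chain `G = K₀ ⊳ K₁ ⊳ K₂ ⊳ ⋯` of finite-index normal subgroups
of `G` with every successive quotient `K i ⧸ K (i+1)` nonabelian, hence of degree of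
commutativity at most `5/8`. -/
theorem exists_descending_chain_nonabelian_quotients (G : Type*) [Group G]
    (hfg : Group.FG G)
    (hres : ∀ g : G, g ≠ 1 → ∃ N : Subgroup G, N.Normal ∧ N.FiniteIndex ∧ g ∉ N)
    (hnva : ¬ ∃ H : Subgroup G, H.FiniteIndex ∧ ∀ a b : H, a * b = b * a) :
    ∃ K : ℕ → Subgroup G, K 0 = ⊤ ∧ (∀ i, (K i).Normal) ∧ (∀ i, (K i).FiniteIndex) ∧
      (∀ i, K (i + 1) < K i) ∧
      ∀ i, ∃ hn : ((K (i + 1)).subgroupOf (K i)).Normal,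
        letI := hn
        (¬ ∀ a b : K i ⧸ (K (i + 1)).subgroupOf (K i), a * b = b * a) ∧
          dc (K i ⧸ (K (i + 1)).subgroupOf (K i)) ≤ 5 / 8 := by
  classical
  have hstep : ∀ K : {K : Subgroup G // K.Normal ∧ K.FiniteIndex},
      ∃ K' : {K : Subgroup G // K.Normal ∧ K.FiniteIndex}, K'.1 < K.1 ∧
        ¬ ∀ a b : K.1, (a * b)⁻¹ * (b * a) ∈ K'.1.subgroupOf K.1 := by
    rintro ⟨K, hKn, hKf⟩
    obtain ⟨K', h1, h2, h3, h4⟩ := chain_step hres hnva K hKn hKf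
    exact ⟨⟨K', h1, h2⟩, h3, h4⟩
  choose f hflt hfna using hstep
  have htop : (⊤ : Subgroup G).Normal ∧ (⊤ : Subgroup G).FiniteIndex :=
    ⟨inferInstance, inferInstance⟩
  set seq : ℕ → {K : Subgroup G // K.Normal ∧ K.FiniteIndex} :=
    fun n => f^[n] ⟨⊤, htop⟩ with hseq
  have hsucc : ∀ i, seq (i + 1) = f (seq i) := fun i => Function.iterate_succ_apply' f i _
  have hlt : ∀ i, (seq (i + 1)).1 < (seq i).1 := fun i => by
    rw [hsucc i]; exact hflt (seq i)
  refine ⟨fun n => (seq n).1, rfl, fun i => (seq i).2.1, fun i => (seq i).2.2, hlt, ?_⟩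
  intro i
  haveI hKn : (seq i).1.Normal := (seq i).2.1
  haveI hK'n : (seq (i + 1)).1.Normal := (seq (i + 1)).2.1
  haveI hn : (((seq (i + 1)).1).subgroupOf (seq i).1).Normal := Subgroup.normal_subgroupOf
  refine ⟨hn, ?_⟩
  have hna : ¬ ∀ a b : (seq i).1, (a * b)⁻¹ * (b * a) ∈ (seq (i + 1)).1.subgroupOf (seq i).1 := by
    rw [hsucc i]; exact hfna (seq i)
  have hnonab : ¬ ∀ x y : (seq i).1 ⧸ (seq (i + 1)).1.subgroupOf (seq i).1, x * y = y * x := by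
    intro hcomm
    apply hna
    intro a b
    have h1 := hcomm (QuotientGroup.mk a) (QuotientGroup.mk b)
    rw [← QuotientGroup.mk_mul, ← QuotientGroup.mk_mul] at h1
    exact (QuotientGroup.eq).mp h1
  haveI hfin : Finite ((seq i).1 ⧸ (seq (i + 1)).1.subgroupOf (seq i).1) := by
    haveI : (((seq (i + 1)).1).subgroupOf (seq i).1).FiniteIndex := by
      constructor
      show (seq (i + 1)).1.relIndex (seq i).1 ≠ 0
      intro h0
      have hle : (seq (i + 1)).1 ≤ (seq i).1 := le_of_lt (hlt i)
      have hmul := Subgroup.relIndex_mul_index hle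
      rw [h0, zero_mul] at hmul
      exact (seq (i + 1)).2.2.index_ne_zero hmul.symm
    infer_instance
  exact ⟨hnonab, dc_le_five_eighths _ hnonab⟩
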